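/- arXiv:2505.21167 — 4 statements merged into one kernel-verified Lean document; each statement's English description precedes it below -/
import Mathlib

section
/- Let Ψ ∈ ⋀^N h be normalized and let Φ ∈ h∧h be a normalized eigenvector of γ₂^Ψ with eigenvalue Λ and canonical form Φ = Σ_{k=1}^∞ λ_k u_k ∧ v_k. Then for every k ∈ ℕ, ‖c(u_k)Ψ‖² ≥ (Λ/2)·λ_k² and ‖c(v_k)Ψ‖² ≥ (Λ/2)·λ_k². -/
/- Setting: `H` is the one-particle Hilbert space `h`, `F` is the fermionic Fock space over
`h` (carrying annihilation operators `an f = c(f)` satisfying the CAR, with adjoints the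
creation operators `c*(f)`, and vacuum `Ω`), and `T` is the two-particle space `h ⊗ h`
(realized by a bilinear map `tp`, with the antisymmetric tensors `h ∧ h` inside it). -/

open scoped ComplexOrder

notation "⟪" x ", " y "⟫_ℂ" => @inner ℂ _ _ x y
open ContinuousLinearMap

noncomputable section

/-- A family of annihilation operators `an f = c(f)` on a Fock space `F` satisfying the
canonical anticommutation relations `{c(f), c(g)} = 0` and `{c(f), c*(g)} = ⟪f, g⟫ • 1`. -/
def SatisfiesCAR {H F : Type*} [NormedAddCommGroup H] [InnerProductSpace ℂ H]
    [NormedAddCommGroup F] [InnerProductSpace ℂ F] [CompleteSpace F]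
    (an : H → F →L[ℂ] F) : Prop :=
  (∀ f g : H, an f ∘L an g + an g ∘L an f = 0) ∧
  (∀ f g : H, an f ∘L adjoint (an g) + adjoint (an g) ∘L an f = ⟪f, g⟫_ℂ • (1 : F →L[ℂ] F))

/-- The action of `B = ∑ₖ λₖ c_{k,↓} c_{k,↑}` (where `c_{k,↑} = an (u k)` and
`c_{k,↓} = an (v k)`) on a vector of the Fock space. -/
def applyB {H F : Type*} [NormedAddCommGroup F] [InnerProductSpace ℂ F]
    (an : H → F →L[ℂ] F) (u v : ℕ → H) (lam : ℕ → ℝ) (ψ : F) : F :=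
  ∑' k : ℕ, (lam k : ℂ) • an (v k) (an (u k) ψ)

/-- The action of `B* = ∑ₖ λₖ c*_{k,↑} c*_{k,↓}` on a vector of the Fock space. -/
def applyBd {H F : Type*} [NormedAddCommGroup F] [InnerProductSpace ℂ F] [CompleteSpace F]
    (an : H → F →L[ℂ] F) (u v : ℕ → H) (lam : ℕ → ℝ) (ψ : F) : F :=
  ∑' k : ℕ, (lam k : ℂ) • adjoint (an (u k)) (adjoint (an (v k)) ψ)

/-- `ψ` belongs to the `N`-particle sector `⋀^N h` of the Fock space, i.e. `ψ` is an
eigenvector of the number operator `𝒩 = ∑ₖ (c*_{k,↑} c_{k,↑} + c*_{k,↓} c_{k,↓})` with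
eigenvalue `N` (here the `u k` and `v k` jointly form an orthonormal basis of `h`). -/
def InSector {H F : Type*} [NormedAddCommGroup F] [InnerProductSpace ℂ F] [CompleteSpace F]
    (an : H → F →L[ℂ] F) (u v : ℕ → H) (N : ℕ) (ψ : F) : Prop :=
  ∑' k : ℕ, (adjoint (an (u k)) (an (u k) ψ) + adjoint (an (v k)) (an (v k) ψ)) = (N : ℂ) • ψ

/-- `Ω` is the (normalized) vacuum vector: it is annihilated by every `an f`. -/
def IsVacuum {H F : Type*} [NormedAddCommGroup F] [InnerProductSpace ℂ F]
    (an : H → F →L[ℂ] F) (Ω : F) : Prop :=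
  ‖Ω‖ = 1 ∧ ∀ f : H, an f Ω = 0

/-- The trial states `Ψ_M = (B*)^M Ω`. -/
def PsiM {H F : Type*} [NormedAddCommGroup F] [InnerProductSpace ℂ F] [CompleteSpace F]
    (an : H → F →L[ℂ] F) (u v : ℕ → H) (lam : ℕ → ℝ) (Ω : F) : ℕ → F
  | 0 => Ω
  | M + 1 => applyBd an u v lam (PsiM an u v lam Ω M)

/-- `tp` realizes the Hilbert space `T` as the Hilbert tensor product `h ⊗ h`: inner
products of elementary tensors multiply, and elementary tensors span a dense subspace. -/
def IsHilbertTensorProduct {H T : Type*} [NormedAddCommGroup H] [InnerProductSpace ℂ H]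
    [NormedAddCommGroup T] [InnerProductSpace ℂ T]
    (tp : H →ₗ[ℂ] H →ₗ[ℂ] T) : Prop :=
  (∀ x y z w : H, ⟪tp x y, tp z w⟫_ℂ = ⟪x, z⟫_ℂ * ⟪y, w⟫_ℂ) ∧
  (Submodule.span ℂ {t : T | ∃ x y : H, t = tp x y}).topologicalClosure = ⊤

/-- The elementary antisymmetric tensor `x ∧ y = (x ⊗ y - y ⊗ x)/√2`. -/
def wedgeVec {H T : Type*} [NormedAddCommGroup H] [InnerProductSpace ℂ H]
    [NormedAddCommGroup T] [InnerProductSpace ℂ T]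
    (tp : H →ₗ[ℂ] H →ₗ[ℂ] T) (x y : H) : T :=
  (((Real.sqrt 2 : ℝ) : ℂ))⁻¹ • (tp x y - tp y x)

/-- `Φ = ∑ₖ λₖ • (u k) ∧ (v k)` is a canonical form of `Φ ∈ h ∧ h`: the sequences
`(u k)` and `(v k)` are jointly orthonormal and jointly span `h`, `λₖ ≥ 0` and
`∑ₖ λₖ² = 1`. -/
def CanonicalWedgeForm {H T : Type*} [NormedAddCommGroup H] [InnerProductSpace ℂ H]
    [NormedAddCommGroup T] [InnerProductSpace ℂ T]
    (tp : H →ₗ[ℂ] H →ₗ[ℂ] T) (u v : ℕ → H) (lam : ℕ → ℝ) (Φ : T) : Prop :=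
  Orthonormal ℂ (Sum.elim u v) ∧
  (Submodule.span ℂ (Set.range u ∪ Set.range v)).topologicalClosure = ⊤ ∧
  (∀ k, 0 ≤ lam k) ∧ (∑' k : ℕ, lam k ^ 2) = 1 ∧
  Φ = ∑' k : ℕ, (lam k : ℂ) • wedgeVec tp (u k) (v k)

/-- `G` is the two-body operator `γ₂^Ψ` associated with the state `Ψ`, characterized by
`⟪φ₁ ⊗ φ₂, G (ψ₁ ⊗ ψ₂)⟫ = ⟪Ψ, c*(ψ₁) c*(ψ₂) c(φ₂) c(φ₁) Ψ⟫`. -/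
def IsTwoBodyOp {H F T : Type*} [NormedAddCommGroup H] [InnerProductSpace ℂ H]
    [NormedAddCommGroup F] [InnerProductSpace ℂ F] [CompleteSpace F]
    [NormedAddCommGroup T] [InnerProductSpace ℂ T]
    (tp : H →ₗ[ℂ] H →ₗ[ℂ] T) (an : H → F →L[ℂ] F) (Ψ : F) (G : T →L[ℂ] T) : Prop :=
  ∀ p q r s : H,
    ⟪tp p q, G (tp r s)⟫_ℂ = ⟪Ψ, adjoint (an r) (adjoint (an s) (an q (an p Ψ)))⟫_ℂ



section AuxLemmas

variable {H F T : Type*} [NormedAddCommGroup H] [InnerProductSpace ℂ H]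
  [NormedAddCommGroup F] [InnerProductSpace ℂ F] [CompleteSpace F]
  [NormedAddCommGroup T] [InnerProductSpace ℂ T] [CompleteSpace T]

/-- Norm bound for annihilation operators from the CAR. -/
lemma an_norm_sq_le (an : H → F →L[ℂ] F) (hCAR : SatisfiesCAR an) (f : H) (x : F) :
    ‖an f x‖ ^ 2 ≤ ‖f‖ ^ 2 * ‖x‖ ^ 2 := by
  have h := congrArg (fun A : F →L[ℂ] F => ⟪x, A x⟫_ℂ) (hCAR.2 f f)
  simp only [ContinuousLinearMap.add_apply, ContinuousLinearMap.coe_comp',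
    Function.comp_apply, ContinuousLinearMap.smul_apply, ContinuousLinearMap.one_apply,
    inner_add_right, inner_smul_right] at h
  rw [ContinuousLinearMap.adjoint_inner_right,
    ← ContinuousLinearMap.adjoint_inner_left (an f) (adjoint (an f) x) x] at h
  rw [inner_self_eq_norm_sq_to_K, inner_self_eq_norm_sq_to_K, inner_self_eq_norm_sq_to_K,
    inner_self_eq_norm_sq_to_K] at h
  have h2 : ‖adjoint (an f) x‖ ^ 2 + ‖an f x‖ ^ 2 = ‖f‖ ^ 2 * ‖x‖ ^ 2 := by
    exact_mod_cast h
  nlinarith [sq_nonneg ‖adjoint (an f) x‖]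

end AuxLemmas

/-- **Proposition 2.** If `Φ = ∑ₖ λₖ uₖ ∧ vₖ` is a normalized eigenvector of `γ₂^Ψ` with
eigenvalue `Λ`, then `‖c_{k,↑}Ψ‖², ‖c_{k,↓}Ψ‖² ≥ (Λ/2)·λₖ²` for every `k`. -/
theorem occupation_lower_bound
    {H F T : Type*} [NormedAddCommGroup H] [InnerProductSpace ℂ H] [CompleteSpace H]
    [NormedAddCommGroup F] [InnerProductSpace ℂ F] [CompleteSpace F]
    [NormedAddCommGroup T] [InnerProductSpace ℂ T] [CompleteSpace T]
    (an : H → F →L[ℂ] F) (hCAR : SatisfiesCAR an)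
    (tp : H →ₗ[ℂ] H →ₗ[ℂ] T) (htp : IsHilbertTensorProduct tp)
    (u v : ℕ → H) (lam : ℕ → ℝ) (Φ : T) (hΦnorm : ‖Φ‖ = 1)
    (hΦ : CanonicalWedgeForm tp u v lam Φ)
    (N : ℕ)
    (Ψ : F) (hΨnorm : ‖Ψ‖ = 1) (hΨsec : InSector an u v N Ψ)
    (G : T →L[ℂ] T) (hG : IsTwoBodyOp tp an Ψ G)
    (Λ : ℝ) (hEig : G Φ = (Λ : ℂ) • Φ) :
    ∀ k : ℕ, Λ / 2 * lam k ^ 2 ≤ ‖an (u k) Ψ‖ ^ 2 ∧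
      Λ / 2 * lam k ^ 2 ≤ ‖an (v k) Ψ‖ ^ 2 := by
  classical
  obtain ⟨horth, hspanH, hlam0, hlamsum, hrep⟩ := hΦ
  obtain ⟨htp1, htp2⟩ := htp
  -- the wedge vectors
  set w : ℕ → T := fun k => wedgeVec tp (u k) (v k) with hw
  have huu : ∀ i j, ⟪u i, u j⟫_ℂ = if i = j then 1 else 0 := by
    intro i j
    simpa using orthonormal_iff_ite.mp horth (Sum.inl i) (Sum.inl j)
  have hvv : ∀ i j, ⟪v i, v j⟫_ℂ = if i = j then 1 else 0 := by
    intro i j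
    simpa using orthonormal_iff_ite.mp horth (Sum.inr i) (Sum.inr j)
  have huv : ∀ i j, ⟪u i, v j⟫_ℂ = 0 := by
    intro i j
    simpa using orthonormal_iff_ite.mp horth (Sum.inl i) (Sum.inr j)
  have hvu : ∀ i j, ⟪v i, u j⟫_ℂ = 0 := by
    intro i j
    simpa using orthonormal_iff_ite.mp horth (Sum.inr i) (Sum.inl j)
  have hnu : ∀ i, ‖u i‖ = 1 := fun i => by simpa using horth.1 (Sum.inl i)
  have hnv : ∀ i, ‖v i‖ = 1 := fun i => by simpa using horth.1 (Sum.inr i)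
  have hs2 : (((Real.sqrt 2 : ℝ) : ℂ))⁻¹ ^ 2 = 2⁻¹ := by
    rw [sq, ← mul_inv, ← Complex.ofReal_mul, Real.mul_self_sqrt (by norm_num : (0:ℝ) ≤ 2)]
    norm_num
  -- the wedge vectors are orthonormal
  have hww : ∀ i j, ⟪w i, w j⟫_ℂ = if i = j then 1 else 0 := by
    intro i j
    simp only [hw, wedgeVec, inner_smul_left, inner_smul_right, inner_sub_left,
      inner_sub_right, map_inv₀, Complex.conj_ofReal, htp1, huu, hvv, huv, hvu]
    by_cases h : i = j
    · simp only [h, if_pos rfl, mul_one, mul_zero, zero_mul, sub_zero, zero_sub]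
      ring_nf
      rw [hs2]
      norm_num
    · simp [h]
  -- summability of the canonical form
  have hsum : Summable (fun j => (lam j : ℂ) • w j) := by
    by_contra hns
    rw [tsum_eq_zero_of_not_summable hns] at hrep
    rw [hrep] at hΦnorm
    simp at hΦnorm
  -- the coefficients
  have hinner : ∀ k, ⟪w k, Φ⟫_ℂ = (lam k : ℂ) := by
    intro k
    calc ⟪w k, Φ⟫_ℂ = innerSL ℂ (w k) (∑' j, (lam j : ℂ) • w j) := by rw [hrep]; rfl
      _ = ∑' j, innerSL ℂ (w k) ((lam j : ℂ) • w j) :=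
        ContinuousLinearMap.map_tsum _ hsum
      _ = ∑' j, if j = k then (lam k : ℂ) else 0 := by
          refine tsum_congr fun j => ?_
          simp only [innerSL_apply_apply, inner_smul_right, hww]
          by_cases h : j = k
          · subst h; simp
          · simp [h, Ne.symm h]
      _ = (lam k : ℂ) := tsum_ite_eq k _
  -- the key identity for elementary tensors
  have hG4 : ∀ p q r s : H,
      ⟪tp p q, G (tp r s)⟫_ℂ = ⟪an s (an r Ψ), an q (an p Ψ)⟫_ℂ := by
    intro p q r s
    rw [hG, ContinuousLinearMap.adjoint_inner_right, ContinuousLinearMap.adjoint_inner_right]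
  -- anticommutation, applied
  have hanti : ∀ (f g : H) (x : F), an f (an g x) = - an g (an f x) := by
    intro f g x
    have h := congrArg (fun A : F →L[ℂ] F => A x) (hCAR.1 f g)
    simp only [ContinuousLinearMap.add_apply, ContinuousLinearMap.coe_comp',
      Function.comp_apply, ContinuousLinearMap.zero_apply] at h
    exact eq_neg_of_add_eq_zero_left h
  -- positivity of G
  have hpos : ∀ t : T, 0 ≤ ⟪t, G t⟫_ℂ := by
    have hspanpos : ∀ t ∈ Submodule.span ℂ {t : T | ∃ x y : H, t = tp x y},
        0 ≤ ⟪t, G t⟫_ℂ := by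
      intro t ht
      obtain ⟨n, c, s, rfl⟩ := Submodule.mem_span_set'.mp ht
      choose p q hpq using fun i => (s i).2
      set ξ : F := ∑ i, (starRingEnd ℂ) (c i) • an (q i) (an (p i) Ψ) with hξ
      have key : ⟪∑ i, c i • (s i : T), G (∑ i, c i • (s i : T))⟫_ℂ = ⟪ξ, ξ⟫_ℂ := by
        have hrw : ∀ i, (s i : T) = tp (p i) (q i) := hpq
        simp only [hrw, hξ, map_sum, map_smul, sum_inner, inner_sum,
          inner_smul_left, inner_smul_right, hG4, RingHom.id_apply, starRingEnd_self_apply,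
          Complex.conj_conj, Finset.mul_sum]
        rw [Finset.sum_comm]
        refine Finset.sum_congr rfl fun i _ => Finset.sum_congr rfl fun j _ => ?_
        ring
      rw [key, Complex.le_def]
      constructor
      · simpa using inner_self_nonneg (𝕜 := ℂ) (x := ξ)
      · rw [Complex.zero_im]
        exact (inner_self_im (𝕜 := ℂ) ξ).symm
    have hclosed : IsClosed {t : T | 0 ≤ ⟪t, G t⟫_ℂ} := by
      have heq : {t : T | 0 ≤ ⟪t, G t⟫_ℂ} = (fun t : T => ⟪t, G t⟫_ℂ) ⁻¹' {z : ℂ | 0 ≤ z} :=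
        rfl
      rw [heq]
      refine IsClosed.preimage (Continuous.inner continuous_id G.continuous) ?_
      have : {z : ℂ | 0 ≤ z} = Complex.re ⁻¹' Set.Ici 0 ∩ Complex.im ⁻¹' {0} := by
        ext z
        simp [Complex.le_def, eq_comm]
      rw [this]
      exact (isClosed_Ici.preimage Complex.continuous_re).inter
        (isClosed_singleton.preimage Complex.continuous_im)
    intro t
    have hmem : t ∈ closure ((Submodule.span ℂ {t : T | ∃ x y : H, t = tp x y} : Submodule ℂ T)
        : Set T) := by
      rw [← Submodule.topologicalClosure_coe, htp2]
      trivial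
    exact closure_minimal hspanpos hclosed hmem
  -- G is symmetric
  have hsym : (G : T →ₗ[ℂ] T).IsSymmetric := by
    rw [LinearMap.isSymmetric_iff_inner_map_self_real]
    intro x
    simp only [ContinuousLinearMap.coe_coe]
    have h := hpos x
    rw [Complex.le_def] at h
    have him : (⟪x, G x⟫_ℂ).im = 0 := by simpa using h.2.symm
    rw [inner_conj_symm, ← inner_conj_symm (G x) x]
    exact ((Complex.conj_eq_iff_im).mpr him).symm
  intro k
  -- the main quantities
  set X : F := an (v k) (an (u k) Ψ) with hX
  have hXX : ⟪X, X⟫_ℂ = ((‖X‖ : ℂ)) ^ 2 := by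
    rw [inner_self_eq_norm_sq_to_K]; rfl
  have hGww : ⟪w k, G (w k)⟫_ℂ = 2 * ((‖X‖ : ℂ)) ^ 2 := by
    have hXY : an (u k) (an (v k) Ψ) = -X := hanti _ _ _
    simp only [hw, wedgeVec, map_smul, map_sub, inner_smul_left, inner_smul_right,
      inner_sub_left, inner_sub_right, map_inv₀, Complex.conj_ofReal, hG4, hXY,
      inner_neg_neg, inner_neg_left, inner_neg_right, ← hX]
    rw [hXX]
    ring_nf
    rw [hs2]
    ring
  have hΦΦ : ⟪Φ, G Φ⟫_ℂ = (Λ : ℂ) := by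
    rw [hEig, inner_smul_right, inner_self_eq_norm_sq_to_K, hΦnorm]
    norm_num
  have hwΦ : ⟪w k, G Φ⟫_ℂ = (Λ : ℂ) * (lam k : ℂ) := by
    rw [hEig, inner_smul_right, hinner k]
  have hΦw : ⟪Φ, G (w k)⟫_ℂ = (Λ : ℂ) * (lam k : ℂ) := by
    have h2 := hsym Φ (w k)
    simp only [ContinuousLinearMap.coe_coe] at h2
    rw [← h2, hEig, inner_smul_left, Complex.conj_ofReal,
      ← inner_conj_symm Φ (w k), hinner k, Complex.conj_ofReal]
  -- the quadratic inequality
  have hquad : ∀ t : ℝ, 0 ≤ (2 * ‖X‖ ^ 2) * (t * t) + (2 * Λ * lam k) * t + Λ := by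
    intro t
    have h := hpos (Φ + (t : ℂ) • w k)
    have h' : ⟪Φ + (t : ℂ) • w k, G (Φ + (t : ℂ) • w k)⟫_ℂ
        = (((2 * ‖X‖ ^ 2) * (t * t) + (2 * Λ * lam k) * t + Λ : ℝ) : ℂ) := by
      simp only [inner_add_left, inner_add_right, map_add, map_smul, inner_smul_left,
        inner_smul_right, hΦΦ, hwΦ, hΦw, hGww, Complex.conj_ofReal]
      push_cast
      ring
    rw [h'] at h
    exact Complex.zero_le_real.mp h
  have hdisc := discrim_le_zero hquad
  rw [discrim] at hdisc
  -- hdisc : (2 * Λ * lam k) ^ 2 - 4 * (2 * ‖X‖ ^ 2) * Λ ≤ 0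
  have hXu : ‖X‖ ^ 2 ≤ ‖an (u k) Ψ‖ ^ 2 := by
    have := an_norm_sq_le an hCAR (v k) (an (u k) Ψ)
    rwa [hnv k, one_pow, one_mul] at this
  have hXv : ‖X‖ ^ 2 ≤ ‖an (v k) Ψ‖ ^ 2 := by
    have hXY : an (u k) (an (v k) Ψ) = -X := hanti _ _ _
    have h1 : ‖X‖ = ‖an (u k) (an (v k) Ψ)‖ := by rw [hXY, norm_neg]
    have := an_norm_sq_le an hCAR (u k) (an (v k) Ψ)
    rw [hnu k, one_pow, one_mul] at this
    rw [h1]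
    exact this
  rcases le_or_gt Λ 0 with hΛ | hΛ
  · constructor <;> nlinarith [sq_nonneg (lam k), sq_nonneg ‖an (u k) Ψ‖,
      sq_nonneg ‖an (v k) Ψ‖]
  · constructor <;> nlinarith [mul_le_mul_of_nonneg_left hXu (le_of_lt hΛ),
      mul_le_mul_of_nonneg_left hXv (le_of_lt hΛ), sq_nonneg (lam k)]
end
end

section
/- Let Φ = Σ_{k=1}^∞ λ_k u_k ∧ v_k be a canonical form of a normalized Φ ∈ h∧h, let B = Σ_{k=1}^∞ λ_k c_{k,↓} c_{k,↑}, and let Ψ_M = (B*)^M Ω. Then for every M ≥ 1, every k ∈ ℕ and σ ∈ {↑,↓}: c_{k,σ} Ψ_M = ±_σ M·λ_k·c*_{k,σ̄} Ψ_{M−1}. -/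
/- Setting: `H` is the one-particle Hilbert space `h`, `F` is the fermionic Fock space over
`h` (carrying annihilation operators `an f = c(f)` satisfying the CAR, with adjoints the
creation operators `c*(f)`, and vacuum `Ω`), and `T` is the two-particle space `h ⊗ h`
(realized by a bilinear map `tp`, with the antisymmetric tensors `h ∧ h` inside it). -/

open scoped ComplexOrder

open ContinuousLinearMap

noncomputable section

/-!
Anticommuting `c(f)` past the pair creators `c*(u_j) c*(v_j)` gives the commutators
`[c_{k,↑}, B*] = λ_k c*_{k,↓}` and `[c_{k,↓}, B*] = -λ_k c*_{k,↑}`, while `c*(f)` commutes with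
`B*`; so each of the `M` factors of `B*` in `Ψ_M` contributes one `λ_k c*_{k,σ̄}`.

The analytic point is that `B*` is an infinite series (a `tsum`, hence junk where it diverges),
so `B* Ψ_M` must be shown to converge. Distinct terms of `B*ψ` have the same inner products as
the corresponding terms of `Bψ`, and each diagonal term exceeds its counterpart by at most
`λ_j² ‖ψ‖²`; hence `B*ψ` converges whenever `Bψ` does, and `B Ψ_{M+1}` converges absolutely by
the formula for `c_{k,↑} Ψ_{M+1}` at the previous step.
-/

theorem norm_sum_sq_eq_of_inner_eq {𝕜 E ι : Type*} [RCLike 𝕜] [SeminormedAddCommGroup E]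
    [InnerProductSpace 𝕜 E] {a b : ι → E}
    (hab : ∀ j k, j ≠ k → inner 𝕜 (a j) (a k) = inner 𝕜 (b k) (b j)) (t : Finset ι) :
    ‖∑ j ∈ t, a j‖ ^ 2 = ‖∑ j ∈ t, b j‖ ^ 2 + ∑ j ∈ t, (‖a j‖ ^ 2 - ‖b j‖ ^ 2) := by
  classical
  have hterm : ∀ j k, RCLike.re (inner 𝕜 (a j) (a k)) =
      RCLike.re (inner 𝕜 (b k) (b j)) + if j = k then ‖a j‖ ^ 2 - ‖b j‖ ^ 2 else 0 := by
    intro j k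
    rcases eq_or_ne j k with rfl | hjk
    · rw [if_pos rfl, ← norm_sq_eq_re_inner, ← norm_sq_eq_re_inner]
      ring
    · simp [hab j k hjk, hjk]
  rw [norm_sq_eq_re_inner (𝕜 := 𝕜) (∑ j ∈ t, a j), norm_sq_eq_re_inner (𝕜 := 𝕜) (∑ j ∈ t, b j)]
  simp only [sum_inner, inner_sum, map_sum, hterm, Finset.sum_add_distrib]
  rw [Finset.sum_comm]
  simp

theorem summable_of_norm_sum_sq_le {ι E : Type*} [SeminormedAddCommGroup E] [CompleteSpace E]
    {a b : ι → E} {c : ι → ℝ} (hb : Summable b) (hc : Summable c)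
    (hab : ∀ t : Finset ι, ‖∑ j ∈ t, a j‖ ^ 2 ≤ ‖∑ j ∈ t, b j‖ ^ 2 + ∑ j ∈ t, c j) :
    Summable a := by
  classical
  refine summable_iff_vanishing_norm.mpr fun ε hε => ?_
  obtain ⟨sb, hsb⟩ := summable_iff_vanishing_norm.mp hb (ε / 2) (by positivity)
  obtain ⟨sc, hsc⟩ := summable_iff_vanishing_norm.mp hc (ε ^ 2 / 2) (by positivity)
  refine ⟨sb ∪ sc, fun t ht => lt_of_pow_lt_pow_left₀ 2 hε.le ?_⟩
  have hbt := hsb t (Finset.disjoint_union_right.mp ht).1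
  have hct := (abs_lt.mp (hsc t (Finset.disjoint_union_right.mp ht).2)).2
  nlinarith [hab t, norm_nonneg (∑ j ∈ t, b j)]

namespace Orthonormal

variable {𝕜 E ι κ : Type*} [RCLike 𝕜] [SeminormedAddCommGroup E] [InnerProductSpace 𝕜 E]
  {u : ι → E} {v : κ → E}

theorem sumElim_left (hon : Orthonormal 𝕜 (Sum.elim u v)) : Orthonormal 𝕜 u :=
  hon.comp _ Sum.inl_injective

theorem sumElim_right (hon : Orthonormal 𝕜 (Sum.elim u v)) : Orthonormal 𝕜 v :=
  hon.comp _ Sum.inr_injective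

theorem inner_sumElim_left_right (hon : Orthonormal 𝕜 (Sum.elim u v)) (i : ι) (j : κ) :
    inner 𝕜 (u i) (v j) = 0 :=
  hon.inner_eq_zero (Sum.inl_ne_inr : (Sum.inl i : ι ⊕ κ) ≠ .inr j)

theorem inner_sumElim_right_left (hon : Orthonormal 𝕜 (Sum.elim u v)) (i : ι) (j : κ) :
    inner 𝕜 (v j) (u i) = 0 :=
  hon.inner_eq_zero (Sum.inr_ne_inl : (Sum.inr j : ι ⊕ κ) ≠ .inl i)

end Orthonormal

def applyBTerm {H F : Type*} [NormedAddCommGroup F] [InnerProductSpace ℂ F]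
    (an : H → F →L[ℂ] F) (u v : ℕ → H) (lam : ℕ → ℝ) (ψ : F) (j : ℕ) : F :=
  (lam j : ℂ) • an (v j) (an (u j) ψ)

def applyBdTerm {H F : Type*} [NormedAddCommGroup F] [InnerProductSpace ℂ F] [CompleteSpace F]
    (an : H → F →L[ℂ] F) (u v : ℕ → H) (lam : ℕ → ℝ) (ψ : F) (j : ℕ) : F :=
  (lam j : ℂ) • adjoint (an (u j)) (adjoint (an (v j)) ψ)

theorem applyBd_eq_tsum {H F : Type*} [NormedAddCommGroup F] [InnerProductSpace ℂ F]
    [CompleteSpace F] (an : H → F →L[ℂ] F) (u v : ℕ → H) (lam : ℕ → ℝ) (ψ : F) :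
    applyBd an u v lam ψ = ∑' j, applyBdTerm an u v lam ψ j :=
  rfl

namespace SatisfiesCAR

variable {H F : Type*} [NormedAddCommGroup H] [InnerProductSpace ℂ H]
  [NormedAddCommGroup F] [InnerProductSpace ℂ F] [CompleteSpace F]
  {an : H → F →L[ℂ] F} {u v : ℕ → H} {lam : ℕ → ℝ}

theorem an_adjoint_apply (h : SatisfiesCAR an) (f g : H) (ψ : F) :
    an f (adjoint (an g) ψ) = ⟪f, g⟫_ℂ • ψ - adjoint (an g) (an f ψ) :=
  eq_sub_of_add_eq (by simpa using congrArg (· ψ) (h.2 f g))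

theorem adjoint_adjoint_apply (h : SatisfiesCAR an) (f g : H) (ψ : F) :
    adjoint (an f) (adjoint (an g) ψ) = -adjoint (an g) (adjoint (an f) ψ) := by
  have hadj := congrArg adjoint (h.1 g f)
  simp only [map_add, adjoint_comp, map_zero] at hadj
  exact eq_neg_of_add_eq_zero_left (by simpa using congrArg (· ψ) hadj)

theorem norm_sq_add_norm_sq (h : SatisfiesCAR an) (f : H) (ψ : F) :
    ‖an f ψ‖ ^ 2 + ‖adjoint (an f) ψ‖ ^ 2 = ‖f‖ ^ 2 * ‖ψ‖ ^ 2 := by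
  have hψ := congrArg (fun T : F →L[ℂ] F => ⟪ψ, T ψ⟫_ℂ) (h.2 f f)
  simp only [add_apply, comp_apply, smul_apply, one_apply_eq_self, inner_add_right,
    inner_smul_right, ← adjoint_inner_left (an f) (adjoint (an f) ψ), adjoint_inner_right,
    inner_self_eq_norm_sq_to_K] at hψ
  exact_mod_cast (add_comm _ _).trans hψ

theorem norm_an_apply_le (h : SatisfiesCAR an) (f : H) (ψ : F) : ‖an f ψ‖ ≤ ‖f‖ * ‖ψ‖ :=
  le_of_pow_le_pow_left₀ two_ne_zero (by positivity)
    (by nlinarith [h.norm_sq_add_norm_sq f ψ, sq_nonneg ‖adjoint (an f) ψ‖])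

theorem norm_adjoint_apply_le (h : SatisfiesCAR an) (f : H) (ψ : F) :
    ‖adjoint (an f) ψ‖ ≤ ‖f‖ * ‖ψ‖ :=
  le_of_pow_le_pow_left₀ two_ne_zero (by positivity)
    (by nlinarith [h.norm_sq_add_norm_sq f ψ, sq_nonneg ‖an f ψ‖])

theorem an_adjoint_adjoint_apply (h : SatisfiesCAR an) (f g g' : H) (ψ : F) :
    an f (adjoint (an g) (adjoint (an g') ψ)) =
      ⟪f, g⟫_ℂ • adjoint (an g') ψ - ⟪f, g'⟫_ℂ • adjoint (an g) ψ +
        adjoint (an g) (adjoint (an g') (an f ψ)) := by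
  rw [h.an_adjoint_apply, h.an_adjoint_apply, map_sub, map_smul]
  abel

theorem adjoint_adjoint_adjoint_apply (h : SatisfiesCAR an) (f g g' : H) (ψ : F) :
    adjoint (an f) (adjoint (an g) (adjoint (an g') ψ)) =
      adjoint (an g) (adjoint (an g') (adjoint (an f) ψ)) := by
  rw [h.adjoint_adjoint_apply f g, h.adjoint_adjoint_apply f g', map_neg, neg_neg]

theorem an_adjoint_adjoint_apply_of_inner_eq_zero (h : SatisfiesCAR an) {f g g' : H}
    (hg : ⟪f, g⟫_ℂ = 0) (hg' : ⟪f, g'⟫_ℂ = 0) (ψ : F) :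
    an f (adjoint (an g) (adjoint (an g') ψ)) = adjoint (an g) (adjoint (an g') (an f ψ)) := by
  simp [h.an_adjoint_adjoint_apply, hg, hg']

theorem inner_adjoint_adjoint_apply (h : SatisfiesCAR an) {f g f' g' : H}
    (hff' : ⟪f, f'⟫_ℂ = 0) (hfg' : ⟪f, g'⟫_ℂ = 0) (hgf' : ⟪g, f'⟫_ℂ = 0) (hgg' : ⟪g, g'⟫_ℂ = 0)
    (ψ : F) :
    ⟪adjoint (an f) (adjoint (an g) ψ), adjoint (an f') (adjoint (an g') ψ)⟫_ℂ =
      ⟪an g' (an f' ψ), an g (an f ψ)⟫_ℂ := by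
  rw [adjoint_inner_left, adjoint_inner_left,
    h.an_adjoint_adjoint_apply_of_inner_eq_zero hff' hfg',
    h.an_adjoint_adjoint_apply_of_inner_eq_zero hgf' hgg', adjoint_inner_right,
    adjoint_inner_right]

theorem norm_sq_adjoint_adjoint_apply_le (h : SatisfiesCAR an) {f g : H} (hf : ‖f‖ = 1)
    (hg : ‖g‖ = 1) (hfg : ⟪f, g⟫_ℂ = 0) (ψ : F) :
    ‖adjoint (an f) (adjoint (an g) ψ)‖ ^ 2 ≤ ‖an g (an f ψ)‖ ^ 2 + ‖ψ‖ ^ 2 := by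
  have hf_ψ := h.norm_sq_add_norm_sq g ψ
  have hg_fψ := h.norm_sq_add_norm_sq g (an f ψ)
  have hf_gψ := h.norm_sq_add_norm_sq f (adjoint (an g) ψ)
  rw [h.an_adjoint_apply, hfg, zero_smul, zero_sub, norm_neg, hf, one_pow, one_mul] at hf_gψ
  rw [hg, one_pow, one_mul] at hf_ψ hg_fψ
  nlinarith [sq_nonneg ‖an g ψ‖, sq_nonneg ‖an f ψ‖]

theorem summable_applyBdTerm_of_summable_applyBTerm (h : SatisfiesCAR an)
    (hon : Orthonormal ℂ (Sum.elim u v)) (hlam : Summable fun j => lam j ^ 2) {ψ : F}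
    (hB : Summable (applyBTerm an u v lam ψ)) : Summable (applyBdTerm an u v lam ψ) := by
  have hcross : ∀ j k, j ≠ k → ⟪applyBdTerm an u v lam ψ j, applyBdTerm an u v lam ψ k⟫_ℂ =
      ⟪applyBTerm an u v lam ψ k, applyBTerm an u v lam ψ j⟫_ℂ := by
    intro j k hjk
    simp only [applyBdTerm, applyBTerm, inner_smul_left, inner_smul_right, Complex.conj_ofReal,
      h.inner_adjoint_adjoint_apply (hon.sumElim_left.inner_eq_zero hjk)
        (hon.inner_sumElim_left_right j k) (hon.inner_sumElim_right_left k j)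
        (hon.sumElim_right.inner_eq_zero hjk)]
    ring
  refine summable_of_norm_sum_sq_le hB (hlam.mul_right (‖ψ‖ ^ 2)) fun t => ?_
  rw [norm_sum_sq_eq_of_inner_eq hcross t]
  gcongr with j
  have hpair := h.norm_sq_adjoint_adjoint_apply_le (hon.sumElim_left.1 j) (hon.sumElim_right.1 j)
    (hon.inner_sumElim_left_right j j) ψ
  simp only [applyBdTerm, applyBTerm, norm_smul, Complex.norm_real, Real.norm_eq_abs, mul_pow,
    sq_abs]
  nlinarith [sq_nonneg (lam j)]

theorem summable_applyBTerm_of_an_eq (h : SatisfiesCAR an)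
    (hon : Orthonormal ℂ (Sum.elim u v)) (hlam : Summable fun j => lam j ^ 2) {ψ φ : F} {C : ℝ}
    (hψ : ∀ j, an (u j) ψ = ((C * lam j : ℝ) : ℂ) • adjoint (an (v j)) φ) :
    Summable (applyBTerm an u v lam ψ) := by
  refine Summable.of_norm_bounded (hlam.mul_left (|C| * ‖φ‖)) fun j => ?_
  have hφ : ‖an (v j) (adjoint (an (v j)) φ)‖ ≤ ‖φ‖ := by
    have hv : ‖v j‖ = 1 := hon.sumElim_right.1 j
    calc ‖an (v j) (adjoint (an (v j)) φ)‖ ≤ ‖adjoint (an (v j)) φ‖ := by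
          simpa [hv] using h.norm_an_apply_le (v j) (adjoint (an (v j)) φ)
      _ ≤ ‖φ‖ := by simpa [hv] using h.norm_adjoint_apply_le (v j) φ
  rw [applyBTerm, hψ, map_smul, norm_smul, norm_smul, Complex.norm_real, Complex.norm_real,
    Real.norm_eq_abs, Real.norm_eq_abs, abs_mul, ← sq_abs (lam j)]
  calc |lam j| * (|C| * |lam j| * ‖an (v j) (adjoint (an (v j)) φ)‖)
      ≤ |lam j| * (|C| * |lam j| * ‖φ‖) := by gcongr
    _ = |C| * ‖φ‖ * |lam j| ^ 2 := by ring

theorem applyBdTerm_smul_adjoint (h : SatisfiesCAR an) (c : ℂ) (f : H) (ψ : F) :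
    applyBdTerm an u v lam (c • adjoint (an f) ψ) =
      fun j => (c • adjoint (an f)) (applyBdTerm an u v lam ψ j) := by
  ext j
  simp only [applyBdTerm, smul_apply, map_smul, h.adjoint_adjoint_adjoint_apply f]

theorem summable_applyBdTerm_smul_adjoint (h : SatisfiesCAR an) (c : ℂ) (f : H) {ψ : F}
    (hψ : Summable (applyBdTerm an u v lam ψ)) :
    Summable (applyBdTerm an u v lam (c • adjoint (an f) ψ)) := by
  rw [h.applyBdTerm_smul_adjoint]
  exact hψ.mapL _

theorem applyBd_smul_adjoint (h : SatisfiesCAR an) (c : ℂ) (f : H) {ψ : F}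
    (hψ : Summable (applyBdTerm an u v lam ψ)) :
    applyBd an u v lam (c • adjoint (an f) ψ) = c • adjoint (an f) (applyBd an u v lam ψ) := by
  rw [applyBd_eq_tsum, h.applyBdTerm_smul_adjoint, ← ContinuousLinearMap.map_tsum _ hψ,
    applyBd_eq_tsum, smul_apply]

theorem an_applyBd (h : SatisfiesCAR an) (f : H) {ψ : F}
    (hψ : Summable (applyBdTerm an u v lam ψ))
    (hfψ : Summable (applyBdTerm an u v lam (an f ψ))) :
    an f (applyBd an u v lam ψ) =
      (∑' j, (lam j : ℂ) • (⟪f, u j⟫_ℂ • adjoint (an (v j)) ψ - ⟪f, v j⟫_ℂ • adjoint (an (u j)) ψ))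
        + applyBd an u v lam (an f ψ) := by
  set r : ℕ → F := fun j =>
    (lam j : ℂ) • (⟪f, u j⟫_ℂ • adjoint (an (v j)) ψ - ⟪f, v j⟫_ℂ • adjoint (an (u j)) ψ)
  have hterm : ∀ j, an f (applyBdTerm an u v lam ψ j) = r j + applyBdTerm an u v lam (an f ψ) j :=
    fun j => by simp only [applyBdTerm, map_smul, h.an_adjoint_adjoint_apply, smul_add, r]
  have hr : Summable r := by
    simpa only [hterm, add_sub_cancel_right] using (hψ.mapL (an f)).sub hfψ
  rw [applyBd_eq_tsum, (an f).map_tsum hψ, tsum_congr hterm, hr.tsum_add hfψ, applyBd_eq_tsum]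

theorem an_u_applyBd (h : SatisfiesCAR an) (hon : Orthonormal ℂ (Sum.elim u v)) (k : ℕ)
    {ψ : F} (hψ : Summable (applyBdTerm an u v lam ψ))
    (hkψ : Summable (applyBdTerm an u v lam (an (u k) ψ))) :
    an (u k) (applyBd an u v lam ψ) =
      (lam k : ℂ) • adjoint (an (v k)) ψ + applyBd an u v lam (an (u k) ψ) := by
  rw [h.an_applyBd (u k) hψ hkψ, tsum_eq_single k fun j hj => by
    simp [hon.sumElim_left.inner_eq_zero hj.symm, hon.inner_sumElim_left_right]]
  simp [hon.inner_sumElim_left_right, inner_self_eq_norm_sq_to_K, hon.sumElim_left.1 k]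

theorem an_v_applyBd (h : SatisfiesCAR an) (hon : Orthonormal ℂ (Sum.elim u v)) (k : ℕ)
    {ψ : F} (hψ : Summable (applyBdTerm an u v lam ψ))
    (hkψ : Summable (applyBdTerm an u v lam (an (v k) ψ))) :
    an (v k) (applyBd an u v lam ψ) =
      -(lam k : ℂ) • adjoint (an (u k)) ψ + applyBd an u v lam (an (v k) ψ) := by
  rw [h.an_applyBd (v k) hψ hkψ, tsum_eq_single k fun j hj => by
    simp [hon.sumElim_right.inner_eq_zero hj.symm, hon.inner_sumElim_right_left]]
  simp [hon.inner_sumElim_right_left, inner_self_eq_norm_sq_to_K, hon.sumElim_right.1 k]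

theorem summable_applyBdTerm_PsiM_and_an_PsiM_succ (h : SatisfiesCAR an)
    (hon : Orthonormal ℂ (Sum.elim u v)) (hlam : Summable fun j => lam j ^ 2) {Ω : F}
    (hΩ : ∀ f, an f Ω = 0) (M : ℕ) :
    Summable (applyBdTerm an u v lam (PsiM an u v lam Ω M)) ∧
      ∀ k, an (u k) (PsiM an u v lam Ω (M + 1)) =
          ((((M : ℝ) + 1) * lam k : ℝ) : ℂ) • adjoint (an (v k)) (PsiM an u v lam Ω M) ∧
        an (v k) (PsiM an u v lam Ω (M + 1)) =
          -(((((M : ℝ) + 1) * lam k : ℝ) : ℂ) • adjoint (an (u k)) (PsiM an u v lam Ω M)) := by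
  induction M with
  | zero =>
    have hS : Summable (applyBdTerm an u v lam Ω) :=
      h.summable_applyBdTerm_of_summable_applyBTerm hon hlam
        (summable_zero.congr fun j => by simp [applyBTerm, hΩ])
    have hS₀ : Summable (applyBdTerm an u v lam (0 : F)) :=
      summable_zero.congr fun j => by simp [applyBdTerm]
    refine ⟨hS, fun k => ⟨?_, ?_⟩⟩ <;> simp only [PsiM]
    · rw [h.an_u_applyBd hon k hS (by rw [hΩ]; exact hS₀)]
      simp [hΩ, applyBd]
    · rw [h.an_v_applyBd hon k hS (by rw [hΩ]; exact hS₀)]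
      simp [hΩ, applyBd]
  | succ M ih =>
    obtain ⟨hS, han⟩ := ih
    have hS' : Summable (applyBdTerm an u v lam (PsiM an u v lam Ω (M + 1))) :=
      h.summable_applyBdTerm_of_summable_applyBTerm hon hlam
        (h.summable_applyBTerm_of_an_eq hon hlam fun j => (han j).1)
    refine ⟨hS', fun k => ⟨?_, ?_⟩⟩
    · have hu := (han k).1
      rw [PsiM, h.an_u_applyBd hon k hS' (hu ▸ h.summable_applyBdTerm_smul_adjoint _ _ hS), hu,
        h.applyBd_smul_adjoint _ _ hS, ← PsiM, ← add_smul]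
      congr 1
      push_cast
      ring
    · have hv := (han k).2
      rw [← neg_smul] at hv
      rw [PsiM, h.an_v_applyBd hon k hS' (hv ▸ h.summable_applyBdTerm_smul_adjoint _ _ hS), hv,
        h.applyBd_smul_adjoint _ _ hS, ← PsiM, ← add_smul, ← neg_smul]
      congr 1
      push_cast
      ring

end SatisfiesCAR

/-- Stated with `M + 1` for the paper's `M ≥ 1`. -/
theorem annihilation_on_PsiM_general
    {H F T : Type*} [NormedAddCommGroup H] [InnerProductSpace ℂ H]
    [NormedAddCommGroup F] [InnerProductSpace ℂ F] [CompleteSpace F]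
    [NormedAddCommGroup T] [InnerProductSpace ℂ T]
    (an : H → F →L[ℂ] F) (hCAR : SatisfiesCAR an)
    (tp : H →ₗ[ℂ] H →ₗ[ℂ] T)
    (u v : ℕ → H) (lam : ℕ → ℝ) (Φ : T)
    (hΦ : CanonicalWedgeForm tp u v lam Φ)
    (Ω : F) (hΩ : IsVacuum an Ω) :
    ∀ (M k : ℕ),
      an (u k) (PsiM an u v lam Ω (M + 1)) =
          ((((M : ℝ) + 1) * lam k : ℝ) : ℂ) • adjoint (an (v k)) (PsiM an u v lam Ω M) ∧
        an (v k) (PsiM an u v lam Ω (M + 1)) =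
          -(((((M : ℝ) + 1) * lam k : ℝ) : ℂ) • adjoint (an (u k)) (PsiM an u v lam Ω M)) := by
  obtain ⟨hon, -, -, hlam_sq, -⟩ := hΦ
  have hlam : Summable fun k => lam k ^ 2 := by
    by_contra hns
    simp [tsum_eq_zero_of_not_summable hns] at hlam_sq
  exact fun M => (hCAR.summable_applyBdTerm_PsiM_and_an_PsiM_succ hon hlam hΩ.2 M).2

/-- **Action of annihilation operators on `Ψ_M`.** For `M ≥ 1` (stated with `M + 1`):
`c_{k,↑} Ψ_{M+1} = (M+1)·λₖ·c*_{k,↓} Ψ_M` and `c_{k,↓} Ψ_{M+1} = -(M+1)·λₖ·c*_{k,↑} Ψ_M`. -/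
theorem annihilation_on_PsiM
    {H F T : Type*} [NormedAddCommGroup H] [InnerProductSpace ℂ H] [CompleteSpace H]
    [NormedAddCommGroup F] [InnerProductSpace ℂ F] [CompleteSpace F]
    [NormedAddCommGroup T] [InnerProductSpace ℂ T] [CompleteSpace T]
    (an : H → F →L[ℂ] F) (hCAR : SatisfiesCAR an)
    (tp : H →ₗ[ℂ] H →ₗ[ℂ] T) (htp : IsHilbertTensorProduct tp)
    (u v : ℕ → H) (lam : ℕ → ℝ) (Φ : T) (hΦnorm : ‖Φ‖ = 1)
    (hΦ : CanonicalWedgeForm tp u v lam Φ)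
    (Ω : F) (hΩ : IsVacuum an Ω) :
    ∀ (M k : ℕ),
      an (u k) (PsiM an u v lam Ω (M + 1)) =
          ((((M : ℝ) + 1) * lam k : ℝ) : ℂ) • adjoint (an (v k)) (PsiM an u v lam Ω M) ∧
        an (v k) (PsiM an u v lam Ω (M + 1)) =
          -(((((M : ℝ) + 1) * lam k : ℝ) : ℂ) • adjoint (an (u k)) (PsiM an u v lam Ω M)) :=
  annihilation_on_PsiM_general an hCAR tp u v lam Φ hΦ Ω hΩ
end
end

section
/- Let Φ = Σ_{k=1}^∞ λ_k u_k ∧ v_k be a canonical form of a normalized Φ ∈ h∧h and let B = Σ_{k=1}^∞ λ_k c_{k,↓} c_{k,↑}. Then for every k ∈ ℕ and σ ∈ {↑,↓}, the operator inequality c*_{k,σ}c_{k,σ} ≥ 2·λ_k·Re(c*_{k,↑}c*_{k,↓}B) − λ_k²·B*B holds on the fermionic Fock space, where Re(A) := (A + A*)/2. -/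
/- Setting: `H` is the one-particle Hilbert space `h`, `F` is the fermionic Fock space over
`h` (carrying annihilation operators `an f = c(f)` satisfying the CAR, with adjoints the
creation operators `c*(f)`, and vacuum `Ω`), and `T` is the two-particle space `h ⊗ h`
(realized by a bilinear map `tp`, with the antisymmetric tensors `h ∧ h` inside it). -/

open scoped ComplexOrder

open ContinuousLinearMap

noncomputable section

/-- **Operator inequality on Fock space.** For every `k` and `σ ∈ {↑,↓}`:
`c*_{k,σ} c_{k,σ} ≥ 2λₖ Re(c*_{k,↑} c*_{k,↓} B) - λₖ² B*B`, in quadratic-form sense. -/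
theorem number_lower_bound
    {H F T : Type*} [NormedAddCommGroup H] [InnerProductSpace ℂ H] [CompleteSpace H]
    [NormedAddCommGroup F] [InnerProductSpace ℂ F] [CompleteSpace F]
    [NormedAddCommGroup T] [InnerProductSpace ℂ T] [CompleteSpace T]
    (an : H → F →L[ℂ] F) (hCAR : SatisfiesCAR an)
    (tp : H →ₗ[ℂ] H →ₗ[ℂ] T) (htp : IsHilbertTensorProduct tp)
    (u v : ℕ → H) (lam : ℕ → ℝ) (Φ : T) (hΦnorm : ‖Φ‖ = 1)
    (hΦ : CanonicalWedgeForm tp u v lam Φ) :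
    ∀ (ψ : F) (k : ℕ),
      2 * lam k *
            (⟪ψ, adjoint (an (u k)) (adjoint (an (v k)) (applyB an u v lam ψ))⟫_ℂ).re
          - lam k ^ 2 * ‖applyB an u v lam ψ‖ ^ 2 ≤ ‖an (u k) ψ‖ ^ 2 ∧
        2 * lam k *
            (⟪ψ, adjoint (an (u k)) (adjoint (an (v k)) (applyB an u v lam ψ))⟫_ℂ).re
          - lam k ^ 2 * ‖applyB an u v lam ψ‖ ^ 2 ≤ ‖an (v k) ψ‖ ^ 2 := by
   
  obtain ⟨hCAR1, hCAR2⟩ := hCAR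
  obtain ⟨hon, -, -, -, -⟩ := hΦ
  intro ψ k
  -- contraction property
  have contr : ∀ (f : H), ⟪f, f⟫_ℂ = 1 → ∀ φ : F, ‖an f φ‖ ^ 2 ≤ ‖φ‖ ^ 2 := by
    intro f hf φ
    have h2 := congrArg (fun A : F →L[ℂ] F => (⟪φ, A φ⟫_ℂ).re) (hCAR2 f f)
    simp only [ContinuousLinearMap.add_apply, ContinuousLinearMap.comp_apply,
      ContinuousLinearMap.smul_apply, ContinuousLinearMap.one_apply, hf, one_smul,
      inner_add_right] at h2
    rw [adjoint_inner_right, ← adjoint_inner_left] at h2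
    have e1 : (⟪an f φ, an f φ⟫_ℂ).re = ‖an f φ‖ ^ 2 := by
      simpa using inner_self_eq_norm_sq (𝕜 := ℂ) (an f φ)
    have e2 : (⟪adjoint (an f) φ, adjoint (an f) φ⟫_ℂ).re = ‖adjoint (an f) φ‖ ^ 2 := by
      simpa using inner_self_eq_norm_sq (𝕜 := ℂ) (adjoint (an f) φ)
    have e3 : (⟪φ, φ⟫_ℂ).re = ‖φ‖ ^ 2 := by
      simpa using inner_self_eq_norm_sq (𝕜 := ℂ) φ
    rw [Complex.add_re, e1, e2, e3] at h2
    nlinarith [sq_nonneg ‖adjoint (an f) φ‖]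
  have huu : ⟪u k, u k⟫_ℂ = 1 := by
    have h1 : ‖u k‖ = 1 := hon.1 (Sum.inl k)
    rw [inner_self_eq_norm_sq_to_K, h1]; norm_num
  have hvv : ⟪v k, v k⟫_ℂ = 1 := by
    have h1 : ‖v k‖ = 1 := hon.1 (Sum.inr k)
    rw [inner_self_eq_norm_sq_to_K, h1]; norm_num
  set a := an (u k)
  set b := an (v k)
  set w := applyB an u v lam ψ with hw
  set x := b (a ψ) with hx
  set y := (lam k : ℂ) • w with hy
  have hanti : b (a ψ) = - (a (b ψ)) := by
    have h1 := congrArg (fun A : F →L[ℂ] F => A ψ) (hCAR1 (v k) (u k))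
    simp only [ContinuousLinearMap.add_apply, ContinuousLinearMap.comp_apply,
      ContinuousLinearMap.zero_apply] at h1
    exact eq_neg_of_add_eq_zero_left h1
  have hxa : ‖x‖ ^ 2 ≤ ‖a ψ‖ ^ 2 := contr (v k) hvv (a ψ)
  have hxb : ‖x‖ ^ 2 ≤ ‖b ψ‖ ^ 2 := by
    rw [hx, hanti, norm_neg]
    exact contr (u k) huu (b ψ)
  have hinner : ⟪ψ, adjoint a (adjoint b w)⟫_ℂ = ⟪x, w⟫_ℂ := by
    rw [adjoint_inner_right, adjoint_inner_right]
  have hre : 2 * lam k * (⟪ψ, adjoint a (adjoint b w)⟫_ℂ).re =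
      2 * (⟪x, y⟫_ℂ).re := by
    rw [hinner, hy, inner_smul_right]
    simp [Complex.ofReal_mul]
    ring
  have hny : ‖y‖ ^ 2 = lam k ^ 2 * ‖w‖ ^ 2 := by
    rw [hy, norm_smul]
    simp [mul_pow, Complex.norm_real, sq_abs]
  have key : 2 * (⟪x, y⟫_ℂ).re - ‖y‖ ^ 2 ≤ ‖x‖ ^ 2 := by
    have h0 : (0:ℝ) ≤ ‖x - y‖ ^ 2 := sq_nonneg _
    have hns := @norm_sub_sq ℂ _ _ _ _ x y
    simp only [RCLike.re_to_complex] at hns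
    nlinarith [hns]
  constructor <;>
  · rw [hre, ← hny]
    linarith
end
end

section
/- Let Ψ ∈ ⋀^N h be normalized, and let Φ ∈ h∧h be a normalized eigenvector of γ₂^Ψ with eigenvalue Λ and canonical form Φ = Σ_{k=1}^∞ λ_k u_k ∧ v_k; let B = Σ_{k=1}^∞ λ_k c_{k,↓} c_{k,↑}. Then for every k ∈ ℕ: 2·⟨Ψ, c*_{k,↑}c*_{k,↓}·B·Ψ⟩ = Λ·λ_k. -/
/- Setting: `H` is the one-particle Hilbert space `h`, `F` is the fermionic Fock space over
`h` (carrying annihilation operators `an f = c(f)` satisfying the CAR, with adjoints the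
creation operators `c*(f)`, and vacuum `Ω`), and `T` is the two-particle space `h ⊗ h`
(realized by a bilinear map `tp`, with the antisymmetric tensors `h ∧ h` inside it). -/

open scoped ComplexOrder

open ContinuousLinearMap

noncomputable section

/- The eigenvalue equation tested against `uₖ ∧ vₖ` reads `Λ λₖ = ⟪uₖ ∧ vₖ, γ₂ Φ⟫`. Expanding
`Φ = ∑ⱼ λⱼ uⱼ ∧ vⱼ`, each matrix element `⟪uₖ ∧ vₖ, γ₂ (uⱼ ∧ vⱼ)⟫` collapses, by the
anticommutation of annihilators, to `2 ⟪xⱼ, xₖ⟫` with `xⱼ = c_{j,↓} c_{j,↑} Ψ`, so the sum is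
`2 ⟪B Ψ, xₖ⟫`, the complex conjugate of the left-hand side; it is real, hence the identity.
The series `B Ψ = ∑ⱼ λⱼ xⱼ` converges because its partial sums have Gram matrix given by `γ₂`:
`‖∑ⱼ λⱼ xⱼ‖² = ⟪ξ, γ₂ ξ⟫ ≤ ‖γ₂‖ ∑ⱼ λⱼ²` with `ξ = ∑ⱼ λⱼ uⱼ ⊗ vⱼ`. -/

lemma inner_tsum_right {ι E : Type*} [NormedAddCommGroup E] [InnerProductSpace ℂ E]
    (x : E) {f : ι → E} (hf : Summable f) : ⟪x, ∑' i, f i⟫_ℂ = ∑' i, ⟪x, f i⟫_ℂ :=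
  (innerSL ℂ x).map_tsum hf

lemma inner_tsum_left {ι E : Type*} [NormedAddCommGroup E] [InnerProductSpace ℂ E]
    {f : ι → E} (hf : Summable f) (y : E) : ⟪∑' i, f i, y⟫_ℂ = ∑' i, ⟪f i, y⟫_ℂ := by
  rw [← inner_conj_symm, inner_tsum_right y hf, Complex.conj_tsum]
  simp only [inner_conj_symm]

lemma Orthonormal.inner_right_tsum {ι E : Type*} [NormedAddCommGroup E] [InnerProductSpace ℂ E]
    {v : ι → E} (hv : Orthonormal ℂ v) {c : ι → ℂ} (hc : Summable fun j => c j • v j) (i : ι) :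
    ⟪v i, ∑' j, c j • v j⟫_ℂ = c i := by
  rw [inner_tsum_right _ hc, tsum_eq_single i]
  · simp [hv.1 i]
  · intro j hj
    simp [hv.inner_eq_zero (Ne.symm hj)]

lemma summable_of_norm_sum_sq_le_s19 {ι E : Type*} [NormedAddCommGroup E] [CompleteSpace E]
    {f : ι → E} {g : ι → ℝ} (hg : Summable g) (C : ℝ)
    (h : ∀ s : Finset ι, ‖∑ i ∈ s, f i‖ ^ 2 ≤ C * ∑ i ∈ s, g i) : Summable f := by
  refine summable_iff_vanishing_norm.mpr fun ε hε => ?_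
  obtain ⟨s, hs⟩ := summable_iff_vanishing_norm.mp hg (ε ^ 2 / (|C| + 1)) (by positivity)
  refine ⟨s, fun t ht => lt_of_pow_lt_pow_left₀ 2 hε.le ?_⟩
  calc ‖∑ i ∈ t, f i‖ ^ 2 ≤ C * ∑ i ∈ t, g i := h t
    _ ≤ |C| * ‖∑ i ∈ t, g i‖ := by rw [Real.norm_eq_abs, ← abs_mul]; exact le_abs_self _
    _ ≤ (|C| + 1) * ‖∑ i ∈ t, g i‖ := by gcongr; linarith
    _ < (|C| + 1) * (ε ^ 2 / (|C| + 1)) := by gcongr; exact hs t ht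
    _ = ε ^ 2 := by field_simp

lemma norm_sum_smul_sq_le_of_inner_eq {ι F T : Type*}
    [NormedAddCommGroup F] [InnerProductSpace ℂ F] [NormedAddCommGroup T] [InnerProductSpace ℂ T]
    {x : ι → F} {t : ι → T} (ht : Orthonormal ℂ t) (G : T →L[ℂ] T)
    (hxt : ∀ j l, ⟪x j, x l⟫_ℂ = ⟪t l, G (t j)⟫_ℂ) (c : ι → ℂ) (s : Finset ι) :
    ‖∑ j ∈ s, c j • x j‖ ^ 2 ≤ ‖G‖ * ∑ j ∈ s, ‖c j‖ ^ 2 := by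
  set ξ := ∑ j ∈ s, starRingEnd ℂ (c j) • t j
  have hgram : ⟪∑ j ∈ s, c j • x j, ∑ j ∈ s, c j • x j⟫_ℂ = ⟪ξ, G ξ⟫_ℂ := by
    simp only [ξ, map_sum, map_smul, sum_inner, inner_sum, inner_smul_left, inner_smul_right,
      hxt, Complex.conj_conj, Finset.mul_sum]
    rw [Finset.sum_comm]
    refine Finset.sum_congr rfl fun j _ => Finset.sum_congr rfl fun l _ => ?_
    ring
  have hξ : ‖ξ‖ ^ 2 = ∑ j ∈ s, ‖c j‖ ^ 2 := by
    have h : ⟪ξ, ξ⟫_ℂ = ∑ j ∈ s, starRingEnd ℂ (starRingEnd ℂ (c j)) * starRingEnd ℂ (c j) :=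
      ht.inner_sum _ _ s
    rw [norm_sq_eq_re_inner (𝕜 := ℂ), h, RCLike.re_to_complex, Complex.re_sum]
    simp [Complex.mul_conj', ← Complex.ofReal_pow]
  calc ‖∑ j ∈ s, c j • x j‖ ^ 2 = RCLike.re ⟪ξ, G ξ⟫_ℂ := by
        rw [← hgram, norm_sq_eq_re_inner (𝕜 := ℂ)]
    _ ≤ ‖⟪ξ, G ξ⟫_ℂ‖ := RCLike.re_le_norm _
    _ ≤ ‖ξ‖ * (‖G‖ * ‖ξ‖) :=
        (norm_inner_le_norm _ _).trans (by gcongr; exact G.le_opNorm ξ)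
    _ = ‖G‖ * ∑ j ∈ s, ‖c j‖ ^ 2 := by rw [← hξ]; ring

lemma summable_smul_of_inner_eq {ι F T : Type*}
    [NormedAddCommGroup F] [InnerProductSpace ℂ F] [CompleteSpace F]
    [NormedAddCommGroup T] [InnerProductSpace ℂ T]
    {x : ι → F} {t : ι → T} (ht : Orthonormal ℂ t) (G : T →L[ℂ] T)
    (hxt : ∀ j l, ⟪x j, x l⟫_ℂ = ⟪t l, G (t j)⟫_ℂ) {c : ι → ℂ}
    (hc : Summable fun j => ‖c j‖ ^ 2) : Summable fun j => c j • x j :=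
  summable_of_norm_sum_sq_le_s19 hc ‖G‖ (norm_sum_smul_sq_le_of_inner_eq ht G hxt c)

lemma inv_sqrt_two_sq : ((√2 : ℝ) : ℂ)⁻¹ ^ 2 = 1 / 2 := by
  rw [← Complex.ofReal_inv, ← Complex.ofReal_pow, inv_pow, Real.sq_sqrt zero_le_two]
  norm_num

section Wedge

variable {H T : Type*} [NormedAddCommGroup H] [InnerProductSpace ℂ H]
  [NormedAddCommGroup T] [InnerProductSpace ℂ T] {tp : H →ₗ[ℂ] H →ₗ[ℂ] T}

lemma orthonormal_tp {ι : Type*} (htp : ∀ x y z w : H, ⟪tp x y, tp z w⟫_ℂ = ⟪x, z⟫_ℂ * ⟪y, w⟫_ℂ)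
    {u v : ι → H} (hu : Orthonormal ℂ u) (hv : Orthonormal ℂ v) :
    Orthonormal ℂ fun k => tp (u k) (v k) := by
  classical
  rw [orthonormal_iff_ite] at hu hv ⊢
  intro i j
  rw [htp, hu, hv]
  split_ifs <;> simp

lemma inner_wedgeVec (htp : ∀ x y z w : H, ⟪tp x y, tp z w⟫_ℂ = ⟪x, z⟫_ℂ * ⟪y, w⟫_ℂ)
    (p q r s : H) :
    ⟪wedgeVec tp p q, wedgeVec tp r s⟫_ℂ = ⟪p, r⟫_ℂ * ⟪q, s⟫_ℂ - ⟪p, s⟫_ℂ * ⟪q, r⟫_ℂ := by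
  simp only [wedgeVec, inner_smul_left, inner_smul_right, inner_sub_left, inner_sub_right, htp,
    map_inv₀, Complex.conj_ofReal]
  linear_combination (2 * (⟪p, r⟫_ℂ * ⟪q, s⟫_ℂ - ⟪p, s⟫_ℂ * ⟪q, r⟫_ℂ)) * inv_sqrt_two_sq

lemma orthonormal_wedgeVec {ι : Type*}
    (htp : ∀ x y z w : H, ⟪tp x y, tp z w⟫_ℂ = ⟪x, z⟫_ℂ * ⟪y, w⟫_ℂ)
    {u v : ι → H} (huv : Orthonormal ℂ (Sum.elim u v)) :
    Orthonormal ℂ fun k => wedgeVec tp (u k) (v k) := by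
  classical
  have hu : Orthonormal ℂ u := huv.comp _ Sum.inl_injective
  have hv : Orthonormal ℂ v := huv.comp _ Sum.inr_injective
  have hvu : ∀ i j, ⟪v i, u j⟫_ℂ = 0 := fun i j =>
    huv.inner_eq_zero (Sum.inr_ne_inl : (Sum.inr i : ι ⊕ ι) ≠ .inl j)
  refine orthonormal_iff_ite.mpr fun i j => ?_
  rw [inner_wedgeVec htp, hvu, mul_zero, sub_zero, orthonormal_iff_ite.mp hu,
    orthonormal_iff_ite.mp hv]
  split_ifs <;> simp

end Wedge

lemma apply_apply_eq_neg_of_anticomm {H F : Type*} [NormedAddCommGroup F] [NormedSpace ℂ F]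
    {an : H → F →L[ℂ] F} (hanti : ∀ f g : H, an f ∘L an g + an g ∘L an f = 0)
    (f g : H) (ψ : F) : an f (an g ψ) = -an g (an f ψ) :=
  eq_neg_of_add_eq_zero_left (by simpa using congrArg (· ψ) (hanti f g))

namespace IsTwoBodyOp

variable {H F T : Type*} [NormedAddCommGroup H] [InnerProductSpace ℂ H]
  [NormedAddCommGroup F] [InnerProductSpace ℂ F] [CompleteSpace F]
  [NormedAddCommGroup T] [InnerProductSpace ℂ T]
  {tp : H →ₗ[ℂ] H →ₗ[ℂ] T} {an : H → F →L[ℂ] F} {Ψ : F} {G : T →L[ℂ] T}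

lemma inner_tp_apply_tp (hG : IsTwoBodyOp tp an Ψ G) (p q r s : H) :
    ⟪tp p q, G (tp r s)⟫_ℂ = ⟪an s (an r Ψ), an q (an p Ψ)⟫_ℂ := by
  rw [hG, adjoint_inner_right, adjoint_inner_right]

lemma inner_wedgeVec_apply_wedgeVec (hG : IsTwoBodyOp tp an Ψ G)
    (hanti : ∀ f g : H, an f ∘L an g + an g ∘L an f = 0) (p q r s : H) :
    ⟪wedgeVec tp p q, G (wedgeVec tp r s)⟫_ℂ = 2 * ⟪an s (an r Ψ), an q (an p Ψ)⟫_ℂ := by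
  simp only [wedgeVec, map_smul, map_sub, inner_smul_left, inner_smul_right, inner_sub_left,
    inner_sub_right, hG.inner_tp_apply_tp, apply_apply_eq_neg_of_anticomm hanti p q,
    apply_apply_eq_neg_of_anticomm hanti r s, inner_neg_left, inner_neg_right, map_inv₀,
    Complex.conj_ofReal]
  linear_combination (4 * ⟪an s (an r Ψ), an q (an p Ψ)⟫_ℂ) * inv_sqrt_two_sq

end IsTwoBodyOp

theorem eigenvector_matrix_element_general
    {H F T : Type*} [NormedAddCommGroup H] [InnerProductSpace ℂ H]
    [NormedAddCommGroup F] [InnerProductSpace ℂ F] [CompleteSpace F]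
    [NormedAddCommGroup T] [InnerProductSpace ℂ T]
    (an : H → F →L[ℂ] F) (hCAR : SatisfiesCAR an)
    (tp : H →ₗ[ℂ] H →ₗ[ℂ] T) (htp : IsHilbertTensorProduct tp)
    (u v : ℕ → H) (lam : ℕ → ℝ) (Φ : T) (hΦnorm : ‖Φ‖ = 1)
    (hΦ : CanonicalWedgeForm tp u v lam Φ)
    (Ψ : F)
    (G : T →L[ℂ] T) (hG : IsTwoBodyOp tp an Ψ G)
    (Λ : ℝ) (hEig : G Φ = (Λ : ℂ) • Φ) :
    ∀ k : ℕ,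
      2 * ⟪Ψ, adjoint (an (u k)) (adjoint (an (v k)) (applyB an u v lam Ψ))⟫_ℂ =
        ((Λ * lam k : ℝ) : ℂ) := by
  intro k
  obtain ⟨hanti, -⟩ := hCAR
  obtain ⟨hon, -, -, hlam, rfl⟩ := hΦ
  set x : ℕ → F := fun j => an (v j) (an (u j) Ψ)
  set w : ℕ → T := fun j => wedgeVec tp (u j) (v j)
  have hw : Orthonormal ℂ w := orthonormal_wedgeVec htp.1 hon
  -- `∑' λⱼ² = 1` and `Φ ≠ 0` rule out the junk value `∑' = 0` of a divergent series.
  have hlam_sum : Summable fun j => lam j ^ 2 := by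
    by_contra h
    rw [tsum_eq_zero_of_not_summable h] at hlam
    exact zero_ne_one hlam
  have hw_sum : Summable fun j => (lam j : ℂ) • w j := by
    by_contra h
    rw [tsum_eq_zero_of_not_summable h, norm_zero] at hΦnorm
    exact zero_ne_one hΦnorm
  have hx_sum : Summable fun j => (lam j : ℂ) • x j := by
    refine summable_smul_of_inner_eq (orthonormal_tp htp.1 (hon.comp _ Sum.inl_injective)
      (hon.comp _ Sum.inr_injective)) G (fun j l => (hG.inner_tp_apply_tp _ _ _ _).symm) ?_
    simpa using hlam_sum
  have h_eig : ⟪w k, G (∑' j, (lam j : ℂ) • w j)⟫_ℂ = ((Λ * lam k : ℝ) : ℂ) := by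
    rw [hEig, inner_smul_right, hw.inner_right_tsum hw_sum]
    push_cast; ring
  have h_expand : ⟪w k, G (∑' j, (lam j : ℂ) • w j)⟫_ℂ = 2 * ⟪applyB an u v lam Ψ, x k⟫_ℂ := by
    rw [G.map_tsum hw_sum, inner_tsum_right _ (hw_sum.mapL G), applyB, inner_tsum_left hx_sum,
      ← tsum_mul_left]
    congr 1 with j
    simp only [map_smul, inner_smul_right, inner_smul_left, Complex.conj_ofReal, w,
      hG.inner_wedgeVec_apply_wedgeVec hanti]
    ring
  rw [adjoint_inner_right, adjoint_inner_right, ← inner_conj_symm, ← map_ofNat (starRingEnd ℂ),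
    ← map_mul, ← h_expand, h_eig, Complex.conj_ofReal]

/-- **Equation (39)/(40).** If `Φ = ∑ₖ λₖ uₖ ∧ vₖ` is an eigenvector of `γ₂^Ψ` with
eigenvalue `Λ`, then `2⟪Ψ, c*_{k,↑} c*_{k,↓} B Ψ⟫ = Λ·λₖ` for every `k`. -/
theorem eigenvector_matrix_element
    {H F T : Type*} [NormedAddCommGroup H] [InnerProductSpace ℂ H] [CompleteSpace H]
    [NormedAddCommGroup F] [InnerProductSpace ℂ F] [CompleteSpace F]
    [NormedAddCommGroup T] [InnerProductSpace ℂ T] [CompleteSpace T]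
    (an : H → F →L[ℂ] F) (hCAR : SatisfiesCAR an)
    (tp : H →ₗ[ℂ] H →ₗ[ℂ] T) (htp : IsHilbertTensorProduct tp)
    (u v : ℕ → H) (lam : ℕ → ℝ) (Φ : T) (hΦnorm : ‖Φ‖ = 1)
    (hΦ : CanonicalWedgeForm tp u v lam Φ)
    (N : ℕ)
    (Ψ : F) (hΨnorm : ‖Ψ‖ = 1) (hΨsec : InSector an u v N Ψ)
    (G : T →L[ℂ] T) (hG : IsTwoBodyOp tp an Ψ G)
    (Λ : ℝ) (hEig : G Φ = (Λ : ℂ) • Φ) :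
    ∀ k : ℕ,
      2 * ⟪Ψ, adjoint (an (u k)) (adjoint (an (v k)) (applyB an u v lam Ψ))⟫_ℂ =
        ((Λ * lam k : ℝ) : ℂ) :=
  eigenvector_matrix_element_general an hCAR tp htp u v lam Φ hΦnorm hΦ Ψ G hG Λ hEig
end
end
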